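/- Suppose S₀ is Hermitian positive semidefinite with tr(S₀) ≤ P and S₀ attains the maximum of min over i = 1,…,K of det(I + H_sᴴ S H_s)/(1 + (h_iᴴ S h_i)/σ_i²) over the feasible set { S : S Hermitian PSD, tr(S) ≤ P }. Set Γ̄_i = h_iᴴ S₀ h_i. Then: (a) g(Γ̄_1,…,Γ̄_K) = det(I + H_sᴴ S₀ H_s); and (b) the vector (Γ̄_1,…,Γ̄_K) attains the maximum of min over i of g(Γ_1,…,Γ_K)/(1 + Γ_i/σ_i²) over all Γ with Γ_i ≥ 0, i.e., for every Γ with Γ_i ≥ 0 for all i, min_i g(Γ_1,…,Γ_K)/(1 + Γ_i/σ_i²) ≤ min_i g(Γ̄_1,…,Γ̄_K)/(1 + Γ̄_i/σ_i²). -/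

import Mathlib

open Matrix ComplexOrder

/-- The (real) quadratic form `hᴴ S h`. -/
noncomputable def quadForm {N : ℕ} (h : Fin N → ℂ) (S : Matrix (Fin N) (Fin N) ℂ) : ℝ :=
  (star h ⬝ᵥ S.mulVec h).re

/-- The (real) value `det(I + Hsᴴ S Hs)`. -/
noncomputable def detVal {N M : ℕ} (Hs : Matrix (Fin N) (Fin M) ℂ)
    (S : Matrix (Fin N) (Fin N) ℂ) : ℝ :=
  ((1 + Hs.conjTranspose * S * Hs).det).re

/-- `g(Γ₁,…,Γ_K)`: the optimal value of the CR spectrum sharing problem. -/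
noncomputable def gFun {N M K : ℕ} (Hs : Matrix (Fin N) (Fin M) ℂ) (h : Fin K → Fin N → ℂ)
    (P : ℝ) (Γ : Fin K → ℝ) : ℝ :=
  sSup {x : ℝ | ∃ S : Matrix (Fin N) (Fin N) ℂ, S.PosSemidef ∧ S.trace.re ≤ P ∧
    (∀ i, quadForm (h i) S ≤ Γ i) ∧ x = detVal Hs S}

/-! Write `F(S) = minᵢ det(I + Hsᴴ S Hs) / (1 + hᵢᴴ S hᵢ / σᵢ²)`. Since `t ↦ a / (1 + t)` is
antitone for `a ≥ 0`, this minimum is attained at the largest weighted interference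
`hᵢᴴ S hᵢ / σᵢ²`. Hence every feasible `S` with `hᵢᴴ S hᵢ ≤ Γᵢ` for all `i` satisfies
`det(I + Hsᴴ S Hs) ≤ (1 + maxᵢ Γᵢ / σᵢ²) F(S) ≤ (1 + maxᵢ Γᵢ / σᵢ²) F(S₀)`.
For `Γ = Γ̄` the right-hand side is `det(I + Hsᴴ S₀ Hs)`, which gives (a); for general `Γ` it
bounds `g(Γ)`, and evaluating the minimum over `i` at the largest `Γᵢ / σᵢ²` gives (b). -/

lemma div_one_add_le_ciInf {ι : Type*} [Nonempty ι] {a m : ℝ} {c : ι → ℝ} (ha : 0 ≤ a)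
    (hc : ∀ i, 0 ≤ c i) (hm : ∀ i, c i ≤ m) : a / (1 + m) ≤ ⨅ i, a / (1 + c i) :=
  le_ciInf fun i => div_le_div_of_nonneg_left ha (by linarith [hc i]) (by linarith [hm i])

section

variable {N M K : ℕ} (Hs : Matrix (Fin N) (Fin M) ℂ) (h : Fin K → Fin N → ℂ) (σ : Fin K → ℝ)

lemma quadForm_nonneg (x : Fin N → ℂ) {S : Matrix (Fin N) (Fin N) ℂ} (hS : S.PosSemidef) :
    0 ≤ quadForm x S := by
  simpa [quadForm] using (Complex.le_def.mp (hS.dotProduct_mulVec_nonneg x)).1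

lemma detVal_nonneg {S : Matrix (Fin N) (Fin N) ℂ} (hS : S.PosSemidef) : 0 ≤ detVal Hs S := by
  have hpd : (1 + Hs.conjTranspose * S * Hs).PosDef :=
    PosDef.one.add_posSemidef (by simpa using hS.conjTranspose_mul_mul_same Hs)
  exact (Complex.lt_def.mp hpd.det_pos).1.le

noncomputable def minRatio (S : Matrix (Fin N) (Fin N) ℂ) : ℝ :=
  ⨅ i, detVal Hs S / (1 + quadForm (h i) S / σ i ^ 2)

variable {Hs h σ}

lemma minRatio_nonneg {S : Matrix (Fin N) (Fin N) ℂ} (hS : S.PosSemidef) :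
    0 ≤ minRatio Hs h σ S :=
  Real.iInf_nonneg fun _ => div_nonneg (detVal_nonneg Hs hS)
    (add_nonneg zero_le_one (div_nonneg (quadForm_nonneg _ hS) (sq_nonneg _)))

lemma detVal_le_mul_of_quadForm_le [NeZero K] {S : Matrix (Fin N) (Fin N) ℂ} {Γ : Fin K → ℝ}
    {m V : ℝ} (hS : S.PosSemidef) (hq : ∀ i, quadForm (h i) S ≤ Γ i)
    (hm : ∀ i, Γ i / σ i ^ 2 ≤ m) (hV : minRatio Hs h σ S ≤ V) :
    detVal Hs S ≤ V * (1 + m) := by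
  have hc : ∀ i, 0 ≤ quadForm (h i) S / σ i ^ 2 :=
    fun i => div_nonneg (quadForm_nonneg _ hS) (sq_nonneg _)
  have hcm : ∀ i, quadForm (h i) S / σ i ^ 2 ≤ m :=
    fun i => (div_le_div_of_nonneg_right (hq i) (sq_nonneg _)).trans (hm i)
  have hm_pos : 0 < 1 + m := by linarith [hc 0, hcm 0]
  exact (div_le_iff₀ hm_pos).mp
    ((div_one_add_le_ciInf (detVal_nonneg Hs hS) hc hcm).trans hV)

lemma gFun_le_mul [NeZero K] {P V m : ℝ} {Γ : Fin K → ℝ}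
    (hopt : ∀ S : Matrix (Fin N) (Fin N) ℂ, S.PosSemidef → S.trace.re ≤ P →
      minRatio Hs h σ S ≤ V)
    (hV : 0 ≤ V) (hm : ∀ i, Γ i / σ i ^ 2 ≤ m) (hm_nonneg : 0 ≤ m) :
    gFun Hs h P Γ ≤ V * (1 + m) := by
  refine Real.sSup_le ?_ (by positivity)
  rintro _ ⟨S, hS, htr, hq, rfl⟩
  exact detVal_le_mul_of_quadForm_le hS hq hm (hopt S hS htr)

lemma gFun_quadForm_eq_detVal [NeZero K] {P : ℝ} {S₀ : Matrix (Fin N) (Fin N) ℂ}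
    (hS₀ : S₀.PosSemidef) (htr₀ : S₀.trace.re ≤ P)
    (hopt : ∀ S : Matrix (Fin N) (Fin N) ℂ, S.PosSemidef → S.trace.re ≤ P →
      minRatio Hs h σ S ≤ minRatio Hs h σ S₀) :
    gFun Hs h P (fun i => quadForm (h i) S₀) = detVal Hs S₀ := by
  obtain ⟨j, hj⟩ := Finite.exists_max fun i => quadForm (h i) S₀ / σ i ^ 2
  have hj_pos : 0 < 1 + quadForm (h j) S₀ / σ j ^ 2 :=
    add_pos_of_pos_of_nonneg one_pos (div_nonneg (quadForm_nonneg _ hS₀) (sq_nonneg _))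
  refine IsGreatest.csSup_eq ⟨⟨S₀, hS₀, htr₀, fun _ => le_rfl, rfl⟩, ?_⟩
  rintro _ ⟨S, hS, htr, hq, rfl⟩
  calc detVal Hs S
      ≤ minRatio Hs h σ S₀ * (1 + quadForm (h j) S₀ / σ j ^ 2) :=
        detVal_le_mul_of_quadForm_le hS hq hj (hopt S hS htr)
    _ ≤ detVal Hs S₀ / (1 + quadForm (h j) S₀ / σ j ^ 2) *
          (1 + quadForm (h j) S₀ / σ j ^ 2) := by
        gcongr
        exact ciInf_le (Finite.bddBelow_range _) j
    _ = detVal Hs S₀ := div_mul_cancel₀ _ hj_pos.ne'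

end

theorem stmt_2_general (N M K : ℕ) [NeZero K]
    (P : ℝ) (σ : Fin K → ℝ)
    (Hs : Matrix (Fin N) (Fin M) ℂ) (h : Fin K → Fin N → ℂ)
    (S₀ : Matrix (Fin N) (Fin N) ℂ) (hS₀ : S₀.PosSemidef) (htr₀ : S₀.trace.re ≤ P)
    (hopt : ∀ S : Matrix (Fin N) (Fin N) ℂ, S.PosSemidef → S.trace.re ≤ P →
      (⨅ i : Fin K, detVal Hs S / (1 + quadForm (h i) S / (σ i) ^ 2)) ≤
      (⨅ i : Fin K, detVal Hs S₀ / (1 + quadForm (h i) S₀ / (σ i) ^ 2))) :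
    gFun Hs h P (fun i => quadForm (h i) S₀) = detVal Hs S₀ ∧
    ∀ Γ : Fin K → ℝ, (∀ i, 0 ≤ Γ i) →
      (⨅ i : Fin K, gFun Hs h P Γ / (1 + Γ i / (σ i) ^ 2)) ≤
      (⨅ i : Fin K, gFun Hs h P (fun j => quadForm (h j) S₀) /
        (1 + quadForm (h i) S₀ / (σ i) ^ 2)) := by
  have hg₀ := gFun_quadForm_eq_detVal hS₀ htr₀ hopt
  refine ⟨hg₀, fun Γ hΓ => ?_⟩
  rw [hg₀]
  obtain ⟨j, hj⟩ := Finite.exists_max fun i => Γ i / σ i ^ 2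
  have hj_nonneg : 0 ≤ Γ j / σ j ^ 2 := div_nonneg (hΓ j) (sq_nonneg _)
  calc (⨅ i, gFun Hs h P Γ / (1 + Γ i / σ i ^ 2))
      ≤ gFun Hs h P Γ / (1 + Γ j / σ j ^ 2) := ciInf_le (Finite.bddBelow_range _) j
    _ ≤ minRatio Hs h σ S₀ := (div_le_iff₀ (by positivity)).mpr
        (gFun_le_mul hopt (minRatio_nonneg hS₀) hj hj_nonneg)

theorem stmt_2 (N M K : ℕ) [NeZero K] (hN : 0 < N) (hM : 0 < M)
    (P : ℝ) (hP : 0 < P) (σ : Fin K → ℝ) (hσ : ∀ i, 0 < σ i)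
    (Hs : Matrix (Fin N) (Fin M) ℂ) (h : Fin K → Fin N → ℂ)
    (S₀ : Matrix (Fin N) (Fin N) ℂ) (hS₀ : S₀.PosSemidef) (htr₀ : S₀.trace.re ≤ P)
    (hopt : ∀ S : Matrix (Fin N) (Fin N) ℂ, S.PosSemidef → S.trace.re ≤ P →
      (⨅ i : Fin K, detVal Hs S / (1 + quadForm (h i) S / (σ i) ^ 2)) ≤
      (⨅ i : Fin K, detVal Hs S₀ / (1 + quadForm (h i) S₀ / (σ i) ^ 2))) :
    gFun Hs h P (fun i => quadForm (h i) S₀) = detVal Hs S₀ ∧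
    ∀ Γ : Fin K → ℝ, (∀ i, 0 ≤ Γ i) →
      (⨅ i : Fin K, gFun Hs h P Γ / (1 + Γ i / (σ i) ^ 2)) ≤
      (⨅ i : Fin K, gFun Hs h P (fun j => quadForm (h j) S₀) /
        (1 + quadForm (h i) S₀ / (σ i) ^ 2)) :=
  stmt_2_general N M K P σ Hs h S₀ hS₀ htr₀ hopt
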